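/- arXiv:2001.07850 — 2 statements merged into one kernel-verified Lean document; each statement's English description precedes it below -/
import Mathlib

section
/- γ_{2t}(K_5 □ K_5) = 8. -/
open SimpleGraph

/-- `S` is a total 2-dominating set of `G`: every vertex has at least 2 neighbors in `S`. -/
def TotalTwoDom {V : Type*} (G : SimpleGraph V) (S : Set V) : Prop :=
  ∀ v : V, 2 ≤ (S ∩ {u | G.Adj v u}).ncard

/-- The total 2-domination number of `G`. -/
noncomputable def gamma2t {V : Type*} [Fintype V] (G : SimpleGraph V) : ℕ :=
  sInf {k | ∃ S : Set V, TotalTwoDom G S ∧ S.ncard = k}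

/-- The complete graph on `n` vertices. -/
def K (n : ℕ) : SimpleGraph (Fin n) := ⊤

/-!
Let `T` be a set of cells of the `m × n` rook's graph, with `r a` cells in row `a` and `c b` in
column `b`. A cell `v = (a, b)` sees `r a + c b` cells of `T` on its lines, counting itself twice
when `v ∈ T`; so `T` is total 2-dominating iff `r a + c b ≥ 2` everywhere and `r a + c b ≥ 4` on
`T`. Summing the latter over `T` gives `4|T| ≤ ∑ r² + ∑ c²`. If a row is empty every column holds
two cells of `T`, so `|T| ≥ 2n`, and symmetrically for columns. Otherwise all `r a, c b ≥ 1`, and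
`∑ r² ≤ (|T| - m)² + 2|T| - m` turns the inequality into `(|T| - m)² + (|T| - n)² ≥ m + n`; for
`m = n = 5` this forces `|T| ≥ 8`. Row `0` and column `0` without their common cell attain `8`.
-/

open Finset

lemma sum_sq_add_card_le {ι : Type*} [Fintype ι] (x : ι → ℕ) (hx : ∀ i, 1 ≤ x i) :
    ∑ i, x i ^ 2 + Fintype.card ι ≤ (∑ i, x i - Fintype.card ι) ^ 2 + 2 * ∑ i, x i := by
  have hpoint : ∀ i, x i ^ 2 + 1 = (x i - 1) ^ 2 + 2 * x i := fun i => by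
    obtain ⟨s, hs⟩ := Nat.exists_eq_add_of_le (hx i)
    rw [hs, Nat.add_sub_cancel_left]
    ring
  have hsub : ∑ i, (x i - 1) = ∑ i, x i - Fintype.card ι := by
    rw [sum_tsub_distrib _ fun i _ => hx i, sum_const, smul_eq_mul, mul_one, card_univ]
  calc ∑ i, x i ^ 2 + Fintype.card ι = ∑ i, (x i ^ 2 + 1) := by
        rw [sum_add_distrib, sum_const, smul_eq_mul, mul_one, card_univ]
    _ = ∑ i, (x i - 1) ^ 2 + 2 * ∑ i, x i := by
        rw [sum_congr rfl fun i _ => hpoint i, sum_add_distrib, mul_sum]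
    _ ≤ (∑ i, (x i - 1)) ^ 2 + 2 * ∑ i, x i := by
        gcongr
        exact sum_sq_le_sq_sum_of_nonneg fun _ _ => Nat.zero_le _
    _ = (∑ i, x i - Fintype.card ι) ^ 2 + 2 * ∑ i, x i := by rw [hsub]

lemma sum_card_fiber_eq_sum_sq {γ ι : Type*} [Fintype ι] [DecidableEq ι] (T : Finset γ)
    (f : γ → ι) : ∑ u ∈ T, #{w ∈ T | f w = f u} = ∑ i, #{w ∈ T | f w = i} ^ 2 := by
  rw [← sum_fiberwise T f fun u => #{w ∈ T | f w = f u}]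
  refine sum_congr rfl fun i _ => ?_
  rw [sum_congr rfl fun u hu => by rw [(mem_filter.1 hu).2], sum_const, smul_eq_mul, sq]

lemma totalTwoDom_coe_iff {V : Type*} {G : SimpleGraph V} [DecidableRel G.Adj] (T : Finset V) :
    TotalTwoDom G T ↔ ∀ v, 2 ≤ #{u ∈ T | G.Adj v u} := by
  simp only [TotalTwoDom, ← Set.ncard_coe_finset, coe_filter]
  rfl

section RookGraph

variable {α β : Type*} [DecidableEq α] [DecidableEq β]

instance SimpleGraph.boxProd.decidableRelAdj {G : SimpleGraph α} {H : SimpleGraph β}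
    [DecidableRel G.Adj] [DecidableRel H.Adj] : DecidableRel (G □ H).Adj :=
  fun _ _ => decidable_of_iff' _ boxProd_adj

abbrev rookGraph (α β : Type*) : SimpleGraph (α × β) := (⊤ : SimpleGraph α) □ (⊤ : SimpleGraph β)

def rowCount (T : Finset (α × β)) (a : α) : ℕ := #{u ∈ T | u.1 = a}

def colCount (T : Finset (α × β)) (b : β) : ℕ := #{u ∈ T | u.2 = b}

lemma card_filter_rookGraph_adj_add_ite (T : Finset (α × β)) (v : α × β) :
    #{u ∈ T | (rookGraph α β).Adj v u} + (if v ∈ T then 2 else 0)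
      = rowCount T v.1 + colCount T v.2 := by
  simp only [rowCount, colCount, card_filter]
  rw [← sum_ite_eq T v fun _ => 2, ← sum_add_distrib, ← sum_add_distrib]
  refine sum_congr rfl fun u _ => ?_
  obtain ⟨a, b⟩ := u
  obtain ⟨a', b'⟩ := v
  by_cases ha : a = a' <;> by_cases hb : b = b' <;> simp [boxProd_adj, ha, hb, eq_comm]

variable {T : Finset (α × β)} (hT : ∀ v, 2 ≤ #{u ∈ T | (rookGraph α β).Adj v u})
include hT

lemma two_le_rowCount_add_colCount (v : α × β) : 2 ≤ rowCount T v.1 + colCount T v.2 := by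
  have := card_filter_rookGraph_adj_add_ite T v
  have := hT v
  omega

lemma four_le_rowCount_add_colCount_of_mem {v : α × β} (hv : v ∈ T) :
    4 ≤ rowCount T v.1 + colCount T v.2 := by
  have hcount := card_filter_rookGraph_adj_add_ite T v
  rw [if_pos hv] at hcount
  have := hT v
  omega

lemma four_mul_card_le_sum_sq [Fintype α] [Fintype β] :
    4 * #T ≤ ∑ a, rowCount T a ^ 2 + ∑ b, colCount T b ^ 2 := by
  calc 4 * #T = ∑ _v ∈ T, 4 := by rw [sum_const, smul_eq_mul, mul_comm]
    _ ≤ ∑ v ∈ T, (rowCount T v.1 + colCount T v.2) :=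
        sum_le_sum fun _ hv => four_le_rowCount_add_colCount_of_mem hT hv
    _ = ∑ a, rowCount T a ^ 2 + ∑ b, colCount T b ^ 2 := by
        rw [sum_add_distrib]
        exact congrArg₂ (· + ·) (sum_card_fiber_eq_sum_sq T Prod.fst)
          (sum_card_fiber_eq_sum_sq T Prod.snd)

lemma two_mul_card_le_of_rowCount_eq_zero [Fintype β] {a : α} (ha : rowCount T a = 0) :
    2 * Fintype.card β ≤ #T := by
  calc 2 * Fintype.card β = ∑ _b : β, 2 := by rw [sum_const, smul_eq_mul, mul_comm, card_univ]
    _ ≤ ∑ b, colCount T b := sum_le_sum fun b _ => by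
        simpa [ha] using two_le_rowCount_add_colCount hT (a, b)
    _ = #T := (card_eq_sum_card_fiberwise fun u _ => mem_univ u.2).symm

lemma two_mul_card_le_of_colCount_eq_zero [Fintype α] {b : β} (hb : colCount T b = 0) :
    2 * Fintype.card α ≤ #T := by
  calc 2 * Fintype.card α = ∑ _a : α, 2 := by rw [sum_const, smul_eq_mul, mul_comm, card_univ]
    _ ≤ ∑ a, rowCount T a := sum_le_sum fun a _ => by
        simpa [hb] using two_le_rowCount_add_colCount hT (a, b)
    _ = #T := (card_eq_sum_card_fiberwise fun u _ => mem_univ u.1).symm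

lemma card_add_card_le_sq_add_sq [Fintype α] [Fintype β] (hr : ∀ a, 1 ≤ rowCount T a)
    (hc : ∀ b, 1 ≤ colCount T b) :
    Fintype.card α + Fintype.card β ≤ (#T - Fintype.card α) ^ 2 + (#T - Fintype.card β) ^ 2 := by
  have hrows := sum_sq_add_card_le _ hr
  have hcols := sum_sq_add_card_le _ hc
  rw [show ∑ a, rowCount T a = #T from
    (card_eq_sum_card_fiberwise fun u _ => mem_univ u.1).symm] at hrows
  rw [show ∑ b, colCount T b = #T from
    (card_eq_sum_card_fiberwise fun u _ => mem_univ u.2).symm] at hcols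
  have := four_mul_card_le_sum_sq hT
  omega

end RookGraph

lemma eight_le_card_of_rookGraph_five {T : Finset (Fin 5 × Fin 5)}
    (hT : ∀ v, 2 ≤ #{u ∈ T | (rookGraph (Fin 5) (Fin 5)).Adj v u}) : 8 ≤ #T := by
  by_contra! hlt
  have hr : ∀ a, 1 ≤ rowCount T a := fun a => by
    by_contra! h0
    have := two_mul_card_le_of_rowCount_eq_zero hT (Nat.lt_one_iff.1 h0)
    simp only [Fintype.card_fin] at this
    omega
  have hc : ∀ b, 1 ≤ colCount T b := fun b => by
    by_contra! h0
    have := two_mul_card_le_of_colCount_eq_zero hT (Nat.lt_one_iff.1 h0)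
    simp only [Fintype.card_fin] at this
    omega
  have hsq := card_add_card_le_sq_add_sq hT hr hc
  simp only [Fintype.card_fin] at hsq
  interval_cases #T <;> omega

theorem stmt_11 : gamma2t (K 5 □ K 5) = 8 := by
  show gamma2t (rookGraph (Fin 5) (Fin 5)) = 8
  let W : Finset (Fin 5 × Fin 5) :=
    {(0, 1), (0, 2), (0, 3), (0, 4), (1, 0), (2, 0), (3, 0), (4, 0)}
  have hW : TotalTwoDom (rookGraph (Fin 5) (Fin 5)) W := (totalTwoDom_coe_iff W).2 (by decide)
  have hWcard : (W : Set (Fin 5 × Fin 5)).ncard = 8 := by rw [Set.ncard_coe_finset]; rfl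
  refine le_antisymm (hWcard ▸ Nat.sInf_le ⟨_, hW, rfl⟩) (le_csInf ⟨_, _, hW, rfl⟩ ?_)
  rintro _ ⟨S, hS, rfl⟩
  lift S to Finset (Fin 5 × Fin 5) using S.toFinite
  rw [Set.ncard_coe_finset]
  exact eight_le_card_of_rookGraph_five ((totalTwoDom_coe_iff S).1 hS)
end

section
/- Let G and H be finite simple graphs without isolated vertices, of orders n and m respectively. Then γ_{2t}(G □ H) ≥ (3/2)·min{n,m}. -/
open SimpleGraph

/-!
Let `S` be a total 2-dominating set of `G □ H` and, for `p = (v, w) ∈ S`, let `c p` and `r p`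
count the vertices of `S` in the column `{v} × W` and in the row `V × {w}`. The two
`S`-neighbours of `p` lie in its row or its column, so `c p + r p ≥ 4`, whence
`1 / c p + 1 / r p ≤ 4 / 3`. If every column and every row meets `S`, summing over `S` gives
`|V| + |W| ≤ (4 / 3) |S|`. If some column misses `S`, the vertices of that column are dominated
within their rows, so every row holds at least two vertices of `S` and `2 |W| ≤ |S|`;
symmetrically for an empty row.
-/

open Finset

lemma inv_add_inv_le_four_div_three {K : Type*} [Field K] [LinearOrder K] [IsStrictOrderedRing K]
    {a b : K} (ha : 1 ≤ a) (hb : 1 ≤ b) (hab : 4 ≤ a + b) : a⁻¹ + b⁻¹ ≤ 4 / 3 := by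
  rw [inv_add_inv (by positivity) (by positivity), div_le_div_iff₀ (by positivity) (by norm_num)]
  -- `4ab - 3(a + b) = 4(a - 1)(b - 1) + (a + b - 4)`
  nlinarith [mul_nonneg (sub_nonneg.2 ha) (sub_nonneg.2 hb)]

section RowsAndColumns

variable {V W : Type*} [DecidableEq V] [DecidableEq W]

def col (S : Finset (V × W)) (v : V) : Finset W := (S.filter (·.1 = v)).image Prod.snd

def row (S : Finset (V × W)) (w : W) : Finset V := (S.filter (·.2 = w)).image Prod.fst

@[simp]
lemma mem_col {S : Finset (V × W)} {v : V} {w : W} : w ∈ col S v ↔ (v, w) ∈ S := by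
  simp [col]

@[simp]
lemma mem_row {S : Finset (V × W)} {v : V} {w : W} : v ∈ row S w ↔ (v, w) ∈ S := by
  simp [row]

lemma sum_eq_sum_sum_col [Fintype V] {M : Type*} [AddCommMonoid M] (S : Finset (V × W))
    (f : V × W → M) :
    ∑ p ∈ S, f p = ∑ v, ∑ w ∈ col S v, f (v, w) :=
  sum_finset_product S univ (col S) (by simp)

lemma sum_eq_sum_sum_row [Fintype W] {M : Type*} [AddCommMonoid M] (S : Finset (V × W))
    (f : V × W → M) :
    ∑ p ∈ S, f p = ∑ w, ∑ v ∈ row S w, f (v, w) :=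
  sum_finset_product_right S univ (row S) (by simp)

lemma card_eq_sum_card_row [Fintype W] (S : Finset (V × W)) : #S = ∑ w, #(row S w) := by
  rw [card_eq_sum_ones, sum_eq_sum_sum_row]
  simp

lemma card_eq_sum_card_col [Fintype V] (S : Finset (V × W)) : #S = ∑ v, #(col S v) := by
  rw [card_eq_sum_ones, sum_eq_sum_sum_col]
  simp

lemma sum_inv_card_col [Fintype V] {S : Finset (V × W)} (hS : ∀ v, (col S v).Nonempty) :
    ∑ p ∈ S, (#(col S p.1) : ℚ)⁻¹ = Fintype.card V := by
  rw [sum_eq_sum_sum_col]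
  simp [(hS _).ne_empty]

lemma sum_inv_card_row [Fintype W] {S : Finset (V × W)} (hS : ∀ w, (row S w).Nonempty) :
    ∑ p ∈ S, (#(row S p.2) : ℚ)⁻¹ = Fintype.card W := by
  rw [sum_eq_sum_sum_row]
  simp [(hS _).ne_empty]

end RowsAndColumns

namespace TotalTwoDom

variable {V W : Type*} [DecidableEq V] [DecidableEq W]
  {G : SimpleGraph V} {H : SimpleGraph W} {S : Finset (V × W)}

lemma two_le_card_erase_row_add_card_erase_col (hS : TotalTwoDom (G □ H) S) (v : V) (w : W) :
    2 ≤ #((row S w).erase v) + #((col S v).erase w) := by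
  have hsub : (S ∩ {p | (G □ H).Adj (v, w) p} : Set (V × W)) ⊆
      ↑((row S w).erase v ×ˢ {w} ∪ {v} ×ˢ (col S v).erase w) := by
    rintro ⟨a, b⟩ ⟨hab, hadj⟩
    simp only [mem_coe, boxProd_adj] at hab hadj
    rcases hadj with ⟨hva, rfl⟩ | ⟨hwb, rfl⟩
    · simp [hab, hva.ne']
    · simp [hab, hwb.ne']
  calc 2 ≤ (S ∩ {p | (G □ H).Adj (v, w) p} : Set (V × W)).ncard := hS (v, w)
    _ ≤ #((row S w).erase v ×ˢ {w} ∪ {v} ×ˢ (col S v).erase w) := by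
      rw [← Set.ncard_coe_finset]; exact Set.ncard_le_ncard hsub (finite_toSet _)
    _ ≤ _ := by
      refine (card_union_le _ _).trans_eq ?_
      rw [card_product, card_product, card_singleton, card_singleton, mul_one, one_mul]

lemma four_le_card_col_add_card_row (hS : TotalTwoDom (G □ H) S) {v : V} {w : W}
    (hvw : (v, w) ∈ S) : 4 ≤ #(col S v) + #(row S w) := by
  have h := hS.two_le_card_erase_row_add_card_erase_col v w
  have hr := card_pos.2 ⟨v, mem_row.2 hvw⟩
  have hc := card_pos.2 ⟨w, mem_col.2 hvw⟩
  rw [card_erase_of_mem (mem_row.2 hvw), card_erase_of_mem (mem_col.2 hvw)] at h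
  omega

lemma inv_card_col_add_inv_card_row_le (hS : TotalTwoDom (G □ H) S) {p : V × W} (hp : p ∈ S) :
    (#(col S p.1) : ℚ)⁻¹ + (#(row S p.2) : ℚ)⁻¹ ≤ 4 / 3 := by
  have hc : 1 ≤ #(col S p.1) := card_pos.2 ⟨p.2, by simpa using hp⟩
  have hr : 1 ≤ #(row S p.2) := card_pos.2 ⟨p.1, by simpa using hp⟩
  exact inv_add_inv_le_four_div_three (mod_cast hc) (mod_cast hr)
    (mod_cast hS.four_le_card_col_add_card_row hp)

lemma two_mul_card_le_card_of_col_eq_empty [Fintype W] (hS : TotalTwoDom (G □ H) S) {v : V}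
    (hv : col S v = ∅) : 2 * Fintype.card W ≤ #S := by
  rw [card_eq_sum_card_row, mul_comm, ← smul_eq_mul, ← card_univ]
  refine card_nsmul_le_sum _ _ _ fun w _ => ?_
  have h := hS.two_le_card_erase_row_add_card_erase_col v w
  rw [hv, erase_empty, card_empty, add_zero] at h
  exact h.trans card_erase_le

lemma two_mul_card_le_card_of_row_eq_empty [Fintype V] (hS : TotalTwoDom (G □ H) S) {w : W}
    (hw : row S w = ∅) : 2 * Fintype.card V ≤ #S := by
  rw [card_eq_sum_card_col, mul_comm, ← smul_eq_mul, ← card_univ]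
  refine card_nsmul_le_sum _ _ _ fun v _ => ?_
  have h := hS.two_le_card_erase_row_add_card_erase_col v w
  rw [hw, erase_empty, card_empty, zero_add] at h
  exact h.trans card_erase_le

theorem three_mul_min_card_le_two_mul_card [Fintype V] [Fintype W]
    (hS : TotalTwoDom (G □ H) S) :
    3 * min (Fintype.card V) (Fintype.card W) ≤ 2 * #S := by
  by_cases hcol : ∃ v, col S v = ∅
  · obtain ⟨v, hv⟩ := hcol
    have := hS.two_mul_card_le_card_of_col_eq_empty hv
    omega
  by_cases hrow : ∃ w, row S w = ∅
  · obtain ⟨w, hw⟩ := hrow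
    have := hS.two_mul_card_le_card_of_row_eq_empty hw
    omega
  simp only [not_exists, ← ne_eq, ← nonempty_iff_ne_empty] at hcol hrow
  have hsum : (Fintype.card V + Fintype.card W : ℚ) ≤ 4 / 3 * #S :=
    calc (Fintype.card V + Fintype.card W : ℚ)
        = ∑ p ∈ S, ((#(col S p.1) : ℚ)⁻¹ + (#(row S p.2) : ℚ)⁻¹) := by
          rw [sum_add_distrib, sum_inv_card_col hcol, sum_inv_card_row hrow]
      _ ≤ ∑ _p ∈ S, (4 / 3 : ℚ) :=
          sum_le_sum fun _ hp => hS.inv_card_col_add_inv_card_row_le hp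
      _ = 4 / 3 * #S := by rw [sum_const, nsmul_eq_mul, mul_comm]
  have : 3 * (Fintype.card V + Fintype.card W) ≤ 4 * #S := by
    exact_mod_cast (by linarith : (3 * (Fintype.card V + Fintype.card W) : ℚ) ≤ 4 * #S)
  omega

end TotalTwoDom

lemma exists_totalTwoDom_ncard_eq_gamma2t {V : Type*} [Fintype V] {G : SimpleGraph V}
    (h : ∃ S : Set V, TotalTwoDom G S) : ∃ S : Set V, TotalTwoDom G S ∧ S.ncard = gamma2t G :=
  let ⟨S, hS⟩ := h
  Nat.sInf_mem (s := {k | ∃ S : Set V, TotalTwoDom G S ∧ S.ncard = k}) ⟨_, S, hS, rfl⟩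

theorem stmt_15_general {V W : Type*} [Fintype V] [Fintype W]
    (G : SimpleGraph V) (H : SimpleGraph W)
    (hex : ∃ S : Set (V × W), TotalTwoDom (G □ H) S) :
    3 * min (Fintype.card V) (Fintype.card W) ≤ 2 * gamma2t (G □ H) := by
  classical
  obtain ⟨S, hS, hcard⟩ := exists_totalTwoDom_ncard_eq_gamma2t hex
  lift S to Finset (V × W) using S.toFinite
  rw [← hcard, Set.ncard_coe_finset]
  exact hS.three_mul_min_card_le_two_mul_card

theorem stmt_15 {V W : Type*} [Fintype V] [Fintype W]
    (G : SimpleGraph V) (H : SimpleGraph W)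
    (hG : ∀ v : V, ∃ u, G.Adj v u) (hH : ∀ w : W, ∃ u, H.Adj w u)
    (hex : ∃ S : Set (V × W), TotalTwoDom (G □ H) S) :
    3 * min (Fintype.card V) (Fintype.card W) ≤ 2 * gamma2t (G □ H) :=
  stmt_15_general G H hex
end
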